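/- arXiv:1910.06222 — 4 statements merged into one kernel-verified Lean document; each statement's English description precedes it below -/
import Mathlib

section
/- Let P and Q be probability measures with P ≪ Q, r* = dP/dQ, and assume Var_Q[r*] < ∞. Then Var_Q[r*] ≥ exp(D_KL(P‖Q)) − 1. -/
open MeasureTheory Real ProbabilityTheory

/-- KL divergence as `E_P[log (dP/dQ)]`. -/
noncomputable def klDiv {X : Type*} [MeasurableSpace X] (P Q : Measure X) : ℝ :=
  ∫ x, Real.log ((P.rnDeriv Q x).toReal) ∂P

/-! With `r = dP/dQ`, the change of measure `dP = r dQ` gives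
`Var_Q[r] = E_Q[r²] - 1 = E_P[r] - 1`, and Jensen's inequality for `exp` gives
`exp (E_P[log r]) ≤ E_P[r]`. -/

lemma exp_integral_log_le_integral {X : Type*} [MeasurableSpace X] {μ : Measure X}
    [IsProbabilityMeasure μ] {f : X → ℝ} (hpos : ∀ᵐ x ∂μ, 0 < f x) (hf : Integrable f μ)
    (hlog : Integrable (fun x => log (f x)) μ) :
    exp (∫ x, log (f x) ∂μ) ≤ ∫ x, f x ∂μ := by
  have hexp_log : (fun x => exp (log (f x))) =ᵐ[μ] f := by
    filter_upwards [hpos] with x hx using exp_log hx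
  calc exp (∫ x, log (f x) ∂μ) ≤ ∫ x, exp (log (f x)) ∂μ :=
        convexOn_exp.map_integral_le continuous_exp.continuousOn isClosed_univ
          (Filter.Eventually.of_forall fun _ => Set.mem_univ _) hlog
          (hf.congr hexp_log.symm)
    _ = ∫ x, f x ∂μ := integral_congr_ae hexp_log

section DensityRatio

variable {X : Type*} [MeasurableSpace X] {P Q : Measure X}

lemma integral_toReal_rnDeriv_sq [SigmaFinite P] [SigmaFinite Q] (hPQ : P ≪ Q) :
    ∫ x, (P.rnDeriv Q x).toReal ^ 2 ∂Q = ∫ x, (P.rnDeriv Q x).toReal ∂P := by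
  simp_rw [sq, integral_toReal_rnDeriv_mul hPQ]

lemma integrable_toReal_rnDeriv_of_integrable_sq [SigmaFinite P] [SigmaFinite Q]
    (hPQ : P ≪ Q) (hsq : Integrable (fun x => (P.rnDeriv Q x).toReal ^ 2) Q) :
    Integrable (fun x => (P.rnDeriv Q x).toReal) P := by
  simpa only [sq, integrable_toReal_rnDeriv_mul_iff hPQ] using hsq

lemma toReal_rnDeriv_pos_ae [SigmaFinite P] [P.HaveLebesgueDecomposition Q] (hPQ : P ≪ Q) :
    ∀ᵐ x ∂P, 0 < (P.rnDeriv Q x).toReal := by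
  filter_upwards [Measure.rnDeriv_pos hPQ, hPQ.ae_le (Measure.rnDeriv_ne_top P Q)]
    with x hpos hne using ENNReal.toReal_pos hpos.ne' hne

lemma variance_toReal_rnDeriv [IsProbabilityMeasure P] [IsProbabilityMeasure Q] (hPQ : P ≪ Q)
    (hsq : Integrable (fun x => (P.rnDeriv Q x).toReal ^ 2) Q) :
    variance (fun x => (P.rnDeriv Q x).toReal) Q = (∫ x, (P.rnDeriv Q x).toReal ∂P) - 1 := by
  have hmem : MemLp (fun x => (P.rnDeriv Q x).toReal) 2 Q :=
    (memLp_two_iff_integrable_sq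
      (Measure.measurable_rnDeriv P Q).ennreal_toReal.aestronglyMeasurable).2 hsq
  rw [variance_eq_sub hmem, Measure.integral_toReal_rnDeriv hPQ]
  simp [integral_toReal_rnDeriv_sq hPQ]

end DensityRatio

/-- The variance of the density ratio `r* = dP/dQ` under `Q` is at least
`exp(D_KL(P‖Q)) − 1`. -/
theorem stmt2 {X : Type*} [MeasurableSpace X] (P Q : Measure X)
    [IsProbabilityMeasure P] [IsProbabilityMeasure Q] (hPQ : P ≪ Q)
    (hvar : Integrable (fun x => ((P.rnDeriv Q x).toReal) ^ 2) Q) :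
    Real.exp (klDiv P Q) - 1 ≤ variance (fun x => (P.rnDeriv Q x).toReal) Q := by
  have hvariance := variance_toReal_rnDeriv hPQ hvar
  by_cases hlog : Integrable (fun x => log (P.rnDeriv Q x).toReal) P
  · have hjensen := exp_integral_log_le_integral (toReal_rnDeriv_pos_ae hPQ)
      (integrable_toReal_rnDeriv_of_integrable_sq hPQ hvar) hlog
    rw [klDiv]
    linarith
  · -- the Bochner integral of a non-integrable function is `0`, so `klDiv P Q = 0`
    rw [klDiv, integral_undef hlog, exp_zero, sub_self]
    exact variance_nonneg _ _
end

section
/- Let r: X → ℝ≥0 be measurable with ∫ r dQ = S ∈ (0,∞) and 0 ≤ r(x) ≤ e^K, and let r_τ = clip(r, e^{−τ}, e^{τ}) with 0 ≤ τ < K. Then |E_Q[r] − E_Q[r_τ]| ≤ max( e^{−τ}|1 − S e^{−τ}| , |(1 − e^{K}e^{−τ} + S(e^{K} − e^{τ}))/(e^{K} − e^{−τ})| ). -/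
open MeasureTheory Real

lemma pt_up (a b M t : ℝ) (ha : 0 < a) (hab : a ≤ b) (hbM : b < M) (htM : t ≤ M) :
    t - max (min t b) a ≤ (M - b) / (M - a) * (t - a) := by
  have hMa : 0 < M - a := by linarith
  rw [div_mul_eq_mul_div, le_div_iff₀ hMa]
  rcases le_total t a with h | h
  · rw [min_eq_left (h.trans hab), max_eq_right h]
    nlinarith [mul_nonneg (sub_nonneg.2 h) (sub_nonneg.2 hab)]
  rcases le_total t b with h2 | h2
  · rw [min_eq_left h2, max_eq_left h]
    nlinarith [mul_nonneg (sub_nonneg.2 h) (by linarith : (0:ℝ) ≤ M - b)]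
  · rw [min_eq_right h2, max_eq_left hab]
    nlinarith [mul_nonneg (by linarith : (0:ℝ) ≤ M - t) (sub_nonneg.2 hab)]

lemma pt_lo (a b t : ℝ) (ha : 0 < a) (ha1 : a ≤ 1) (hab1 : a * b = 1) (ht : 0 ≤ t) :
    a * a * t - a ≤ t - max (min t b) a := by
  have hab : a ≤ b := by nlinarith
  rcases le_total t a with h | h
  · rw [min_eq_left (h.trans hab), max_eq_right h]
    nlinarith [mul_nonneg (mul_nonneg (by linarith : (0:ℝ) ≤ 1 - a) (by linarith : (0:ℝ) ≤ 1 + a)) ht]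
  rcases le_total t b with h2 | h2
  · rw [min_eq_left h2, max_eq_left h]
    nlinarith [mul_nonneg ha.le (by nlinarith : (0:ℝ) ≤ 1 - a * t)]
  · rw [min_eq_right h2, max_eq_left hab]
    nlinarith [mul_nonneg (mul_nonneg ha.le (sub_nonneg.2 h2)) (sub_nonneg.2 hab)]

/-- Bias of the clipped partition function estimate when `0 ≤ τ < K`:
`|E_Q[r] − E_Q[clip(r, e^{−τ}, e^{τ})]|` is at most
`max( e^{−τ}|1 − S e^{−τ}| , |(1 − e^K e^{−τ} + S(e^K − e^τ))/(e^K − e^{−τ})| )`. -/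
theorem stmt6 {X : Type*} [MeasurableSpace X] (Q : Measure X) [IsProbabilityMeasure Q]
    (r : X → ℝ) (hr : Measurable r) (K τ S : ℝ) (hτ : 0 ≤ τ) (hτK : τ < K)
    (hrpos : ∀ x, 0 ≤ r x) (hrK : ∀ x, r x ≤ Real.exp K)
    (hS : ∫ x, r x ∂Q = S) (hSpos : 0 < S) :
    |(∫ x, r x ∂Q) - ∫ x, max (min (r x) (Real.exp τ)) (Real.exp (-τ)) ∂Q| ≤
      max (Real.exp (-τ) * |1 - S * Real.exp (-τ)|)
        (|(1 - Real.exp K * Real.exp (-τ) + S * (Real.exp K - Real.exp τ)) /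
          (Real.exp K - Real.exp (-τ))|) := by
  set a := Real.exp (-τ) with ha_def
  set b := Real.exp τ with hb_def
  set M := Real.exp K with hM_def
  have ha : 0 < a := exp_pos _
  have hb : 0 < b := exp_pos _
  have hab1 : a * b = 1 := by rw [ha_def, hb_def, ← exp_add]; simp
  have ha1 : a ≤ 1 := by
    rw [ha_def, ← Real.exp_zero]
    exact exp_le_exp.2 (by linarith)
  have h1b : 1 ≤ b := by
    rw [hb_def, ← Real.exp_zero]
    exact exp_le_exp.2 hτ
  have hab : a ≤ b := ha1.trans h1b
  have hbM : b < M := exp_lt_exp.2 hτK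
  have haM : a < M := lt_of_le_of_lt hab hbM
  have hMa : 0 < M - a := by linarith
  set c : X → ℝ := fun x => max (min (r x) b) a with hc_def
  have hcmeas : Measurable c := (hr.min measurable_const).max measurable_const
  have hrint : Integrable r Q := by
    refine Integrable.mono' (integrable_const M) hr.aestronglyMeasurable ?_
    filter_upwards with x
    rw [Real.norm_eq_abs, abs_of_nonneg (hrpos x)]; exact hrK x
  have hcint : Integrable c Q := by
    refine Integrable.mono' (integrable_const b) hcmeas.aestronglyMeasurable ?_
    filter_upwards with x
    rw [Real.norm_eq_abs, abs_of_nonneg (le_trans ha.le (le_max_right _ _))]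
    exact max_le (min_le_right _ _) hab
  have key : (∫ x, r x ∂Q) - ∫ x, c x ∂Q = ∫ x, (r x - c x) ∂Q :=
    (integral_sub hrint hcint).symm
  -- upper bound
  have hup : ∫ x, (r x - c x) ∂Q ≤ (M - b) / (M - a) * (S - a) := by
    have h1 : ∫ x, (r x - c x) ∂Q ≤ ∫ x, (M - b) / (M - a) * (r x - a) ∂Q := by
      refine integral_mono (hrint.sub hcint)
        (((hrint.sub (integrable_const a)).const_mul _)) ?_
      intro x
      exact pt_up a b M (r x) ha hab hbM (hrK x)
    calc ∫ x, (r x - c x) ∂Q ≤ ∫ x, (M - b) / (M - a) * (r x - a) ∂Q := h1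
      _ = (M - b) / (M - a) * (S - a) := by
          rw [integral_const_mul, integral_sub hrint (integrable_const a), hS,
            integral_const]
          simp
  -- lower bound
  have hlo : a * a * S - a ≤ ∫ x, (r x - c x) ∂Q := by
    have h1 : ∫ x, (a * a * r x - a) ∂Q ≤ ∫ x, (r x - c x) ∂Q := by
      refine integral_mono ((hrint.const_mul _).sub (integrable_const a))
        (hrint.sub hcint) ?_
      intro x
      exact pt_lo a b (r x) ha ha1 hab1 (hrpos x)
    calc a * a * S - a = ∫ x, (a * a * r x - a) ∂Q := by
          rw [integral_sub (hrint.const_mul _) (integrable_const a),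
            integral_const_mul, hS, integral_const]
          simp
      _ ≤ _ := h1
  have heq : (M - b) / (M - a) * (S - a)
      = (1 - M * a + S * (M - b)) / (M - a) := by
    rw [div_mul_eq_mul_div]
    congr 1
    linear_combination hab1
  rw [key]
  rw [abs_le]
  constructor
  · refine le_trans (neg_le_neg (le_max_left (a * |1 - S * a|) _)) ?_
    have : a * (1 - S * a) ≤ a * |1 - S * a| :=
      mul_le_mul_of_nonneg_left (le_abs_self _) ha.le
    linarith
  · refine le_trans hup ?_
    rw [heq]
    exact le_trans (le_abs_self _) (le_max_right _ _)
end

section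
/- (Nguyen–Wainwright–Jordan) For probability measures P ≪ Q and any bounded measurable T: D_KL(P‖Q) ≥ E_P[T] − E_Q[e^{T−1}], with equality when T = log(dP/dQ) + 1. -/
open MeasureTheory Real

/-! Writing `f = dP/dQ`, the pointwise Fenchel–Young inequality `t u - e^{t-1} ≤ u log u`
(`t ↦ e^{t-1}` is the convex conjugate of `u ↦ u log u`) gives
`f T - e^{T-1} ≤ f log f`; integrating against `Q` turns this into
`E_P[T] - E_Q[e^{T-1}] ≤ E_P[log f]`. For `T = log f + 1` the exponential term becomes `f`,
whose `Q`-integral is the total mass of `P`, which cancels the `+ 1`. -/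

theorem Real.mul_sub_exp_sub_one_le_mul_log {u : ℝ} (hu : 0 ≤ u) (t : ℝ) :
    t * u - exp (t - 1) ≤ u * log u := by
  rcases hu.eq_or_lt with rfl | hu
  · simpa using (exp_pos (t - 1)).le
  · have key : u * (t - log u) ≤ exp (t - 1) :=
      calc u * (t - log u) = u * ((t - 1 - log u) + 1) := by ring
        _ ≤ u * exp (t - 1 - log u) := by gcongr; exact add_one_le_exp _
        _ = exp (t - 1) := by rw [exp_sub, exp_log hu]; field_simp
    linear_combination key

section KLDiv

variable {X : Type*} [MeasurableSpace X] {P Q : Measure X}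

theorem integral_sub_integral_exp_sub_one_le_klDiv [SigmaFinite P] [P.HaveLebesgueDecomposition Q]
    (hPQ : P ≪ Q) (hKL : Integrable (fun x => log (P.rnDeriv Q x).toReal) P) {T : X → ℝ}
    (hT : Integrable T P) (hexp : Integrable (fun x => exp (T x - 1)) Q) :
    ∫ x, T x ∂P - ∫ x, exp (T x - 1) ∂Q ≤ klDiv P Q := by
  have hfT : Integrable (fun x => (P.rnDeriv Q x).toReal * T x) Q :=
    (integrable_toReal_rnDeriv_mul_iff hPQ).mpr hT
  have hflog : Integrable (fun x => (P.rnDeriv Q x).toReal * log (P.rnDeriv Q x).toReal) Q :=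
    (integrable_toReal_rnDeriv_mul_iff hPQ).mpr hKL
  rw [klDiv, ← integral_toReal_rnDeriv_mul hPQ, ← integral_toReal_rnDeriv_mul hPQ,
    sub_le_iff_le_add, ← integral_add hflog hexp]
  refine integral_mono hfT (hflog.add hexp) fun x => ?_
  have := mul_sub_exp_sub_one_le_mul_log (P.rnDeriv Q x).toReal_nonneg (T x)
  dsimp only [Pi.add_apply]
  linarith

theorem integral_exp_log_rnDeriv [SigmaFinite P] [SigmaFinite Q] (hPQ : P ≪ Q)
    (hpos : ∀ᵐ x ∂Q, 0 < (P.rnDeriv Q x).toReal) :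
    ∫ x, exp (log (P.rnDeriv Q x).toReal) ∂Q = P.real Set.univ := by
  rw [← Measure.integral_toReal_rnDeriv hPQ]
  exact integral_congr_ae (hpos.mono fun x hx => exp_log hx)

theorem klDiv_eq_integral_log_rnDeriv_add_one_sub [IsFiniteMeasure P] [SigmaFinite Q]
    (hPQ : P ≪ Q) (hpos : ∀ᵐ x ∂Q, 0 < (P.rnDeriv Q x).toReal)
    (hKL : Integrable (fun x => log (P.rnDeriv Q x).toReal) P) :
    klDiv P Q = ∫ x, (log (P.rnDeriv Q x).toReal + 1) ∂P -
      ∫ x, exp ((log (P.rnDeriv Q x).toReal + 1) - 1) ∂Q := by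
  simp only [add_sub_cancel_right]
  rw [integral_add hKL (integrable_const 1), integral_const, integral_exp_log_rnDeriv hPQ hpos,
    klDiv, smul_eq_mul, mul_one, add_sub_cancel_right]

end KLDiv

/-- Nguyen–Wainwright–Jordan: for any bounded measurable `T`,
`D_KL(P‖Q) ≥ E_P[T] − E_Q[e^{T−1}]`, with equality when `T = log(dP/dQ) + 1`. -/
theorem stmt10 {X : Type*} [MeasurableSpace X] (P Q : Measure X)
    [IsProbabilityMeasure P] [IsProbabilityMeasure Q] (hPQ : P ≪ Q)
    (hpos : ∀ᵐ x ∂Q, 0 < (P.rnDeriv Q x).toReal)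
    (hKL : Integrable (fun x => Real.log ((P.rnDeriv Q x).toReal)) P) :
    (∀ T : X → ℝ, Measurable T → (∃ C : ℝ, ∀ x, |T x| ≤ C) →
      (∫ x, T x ∂P) - (∫ x, Real.exp (T x - 1) ∂Q) ≤ klDiv P Q) ∧
    klDiv P Q =
      (∫ x, (Real.log ((P.rnDeriv Q x).toReal) + 1) ∂P) -
        ∫ x, Real.exp ((Real.log ((P.rnDeriv Q x).toReal) + 1) - 1) ∂Q := by
  refine ⟨fun T hT ⟨C, hC⟩ => ?_, klDiv_eq_integral_log_rnDeriv_add_one_sub hPQ hpos hKL⟩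
  have hexp_le : ∀ x, ‖exp (T x - 1)‖ ≤ exp (C - 1) := fun x => by
    rw [norm_of_nonneg (exp_pos _).le, exp_le_exp]
    linarith [(abs_le.mp (hC x)).2]
  exact integral_sub_integral_exp_sub_one_le_klDiv hPQ hKL
    (.of_bound hT.aestronglyMeasurable C (ae_of_all _ hC))
    (.of_bound (hT.sub_const 1).exp.aestronglyMeasurable _ (ae_of_all _ hexp_le))
end

section
/- Let P ≪ Q with r* = dP/dQ having finite variance under Q, let P_m, Q_n be empirical averages of m and n independent samples from P and Q respectively (P-samples independent of Q-samples). Define I_NWJ^{m,n} = E_{P_m}[log r* + 1] − E_{Q_n}[r*]. Then Var[I_NWJ^{m,n}] ≥ (exp(D_KL(P‖Q)) − 1)/n for all m. -/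
/-!
Write `r = dP/dQ`. The two sample means are independent, so the variance of their difference
is at least the variance of the `Q`-sample mean, `Var_Q[r] / n`. Jensen's inequality for `exp`
gives `exp (KL(P‖Q)) ≤ E_P[r] = E_Q[r²] = Var_Q[r] + 1`. The bound `t (log t)² ≤ 8 (1 + t²)`
puts `log r` in `L²(P)`, so the `P`-sample mean has finite variance and the variances of the
two independent means add.
-/

open MeasureTheory Real ProbabilityTheory

namespace Real

lemma abs_mul_log_le_one_add_sq {t : ℝ} (ht : 0 ≤ t) : |t * log t| ≤ 1 + t ^ 2 := by
  rcases ht.eq_or_lt with rfl | ht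
  · simp
  have hupper : t * log t ≤ t * (t - 1) :=
    mul_le_mul_of_nonneg_left (log_le_sub_one_of_pos ht) ht.le
  have hlower : t * (1 - t⁻¹) ≤ t * log t :=
    mul_le_mul_of_nonneg_left (one_sub_inv_le_log_of_pos ht) ht.le
  rw [mul_sub, mul_one, mul_inv_cancel₀ ht.ne'] at hlower
  rw [abs_le]
  constructor <;> nlinarith

lemma mul_log_sq_le {t : ℝ} (ht : 0 ≤ t) : t * log t ^ 2 ≤ 8 * (1 + t ^ 2) := by
  obtain ⟨u, hu, rfl⟩ : ∃ u, 0 ≤ u ∧ u ^ 2 = t := ⟨√t, sqrt_nonneg t, sq_sqrt ht⟩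
  have hmain : (u * log u) ^ 2 ≤ (1 + u ^ 2) ^ 2 :=
    sq_le_sq' (abs_le.1 (abs_mul_log_le_one_add_sq hu)).1
      (abs_le.1 (abs_mul_log_le_one_add_sq hu)).2
  calc u ^ 2 * log (u ^ 2) ^ 2 = 4 * (u * log u) ^ 2 := by rw [log_pow]; push_cast; ring
    _ ≤ 4 * (1 + u ^ 2) ^ 2 := by gcongr
    _ ≤ 8 * (1 + (u ^ 2) ^ 2) := by nlinarith [sq_nonneg (u ^ 2 - 1)]

end Real

section RadonNikodym

variable {X : Type*} [MeasurableSpace X] {P Q : Measure X}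

lemma memLp_two_log_toReal_rnDeriv [SigmaFinite P] [IsFiniteMeasure Q] (hPQ : P ≪ Q)
    (hr : Integrable (fun x => (P.rnDeriv Q x).toReal ^ 2) Q) :
    MemLp (fun x => log (P.rnDeriv Q x).toReal) 2 P := by
  have hrm : Measurable fun x => (P.rnDeriv Q x).toReal :=
    (Measure.measurable_rnDeriv P Q).ennreal_toReal
  rw [memLp_two_iff_integrable_sq hrm.log.aestronglyMeasurable,
    ← integrable_toReal_rnDeriv_mul_iff hPQ]
  refine (((integrable_const 1).add hr).const_mul 8).mono' (by fun_prop) (ae_of_all _ fun x => ?_)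
  rw [norm_of_nonneg (by positivity)]
  exact mul_log_sq_le ENNReal.toReal_nonneg

lemma exp_klDiv_le_integral_toReal_rnDeriv [IsProbabilityMeasure P] [SigmaFinite Q]
    (hPQ : P ≪ Q) (hlog : Integrable (fun x => log (P.rnDeriv Q x).toReal) P)
    (hr : Integrable (fun x => (P.rnDeriv Q x).toReal) P) :
    exp (klDiv P Q) ≤ ∫ x, (P.rnDeriv Q x).toReal ∂P := by
  have hexp_log : ∀ᵐ x ∂P, exp (log (P.rnDeriv Q x).toReal) = (P.rnDeriv Q x).toReal := by
    filter_upwards [Measure.rnDeriv_pos hPQ, hPQ.ae_le (Measure.rnDeriv_lt_top P Q)]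
      with x hpos hlt
    exact exp_log (ENNReal.toReal_pos hpos.ne' hlt.ne)
  calc exp (klDiv P Q) ≤ ∫ x, exp (log (P.rnDeriv Q x).toReal) ∂P :=
        convexOn_exp.map_integral_le continuous_exp.continuousOn isClosed_univ (by simp) hlog
          (hr.congr (hexp_log.mono fun x hx => hx.symm))
    _ = ∫ x, (P.rnDeriv Q x).toReal ∂P := integral_congr_ae hexp_log

lemma exp_klDiv_sub_one_le_variance_toReal_rnDeriv [IsProbabilityMeasure P]
    [IsProbabilityMeasure Q] (hPQ : P ≪ Q)
    (hr : Integrable (fun x => (P.rnDeriv Q x).toReal ^ 2) Q) :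
    exp (klDiv P Q) - 1 ≤ variance (fun x => (P.rnDeriv Q x).toReal) Q := by
  have hrm : Measurable fun x => (P.rnDeriv Q x).toReal :=
    (Measure.measurable_rnDeriv P Q).ennreal_toReal
  have hrP : Integrable (fun x => (P.rnDeriv Q x).toReal) P := by
    rw [← integrable_toReal_rnDeriv_mul_iff hPQ]
    simpa only [sq] using hr
  have hsq : ∫ x, (P.rnDeriv Q x).toReal ^ 2 ∂Q = ∫ x, (P.rnDeriv Q x).toReal ∂P := by
    simpa only [sq] using integral_toReal_rnDeriv_mul hPQ
  rw [variance_eq_sub ((memLp_two_iff_integrable_sq hrm.aestronglyMeasurable).2 hr)]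
  simp only [Pi.pow_apply, hsq, Measure.integral_toReal_rnDeriv hPQ, probReal_univ, one_pow]
  linarith [exp_klDiv_le_integral_toReal_rnDeriv hPQ
    ((memLp_two_log_toReal_rnDeriv hPQ hr).integrable one_le_two) hrP]

end RadonNikodym

section Independence

variable {Ω : Type*} [MeasurableSpace Ω] {μ : Measure Ω}

lemma memLp_const_mul_sum_comp {ι X : Type*} [MeasurableSpace X] [Fintype ι] {ν : Measure X}
    {Y : ι → Ω → X} {g : X → ℝ} {p : ENNReal} (hY : ∀ i, MeasurePreserving (Y i) μ ν)
    (hg : MemLp g p ν) (c : ℝ) :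
    MemLp (fun ω => c * ∑ i, g (Y i ω)) p μ :=
  (memLp_finsetSum _ fun i _ => hg.comp_measurePreserving (hY i)).const_mul c

namespace ProbabilityTheory

lemma iIndepFun.indepFun_sumInl_sumInr {ι κ X : Type*} [MeasurableSpace X]
    [Fintype ι] [Fintype κ] {Z : ι ⊕ κ → Ω → X} (hZ : iIndepFun Z μ)
    (hmeas : ∀ k, Measurable (Z k)) :
    IndepFun (fun ω i => Z (Sum.inl i) ω) (fun ω j => Z (Sum.inr j) ω) μ := by
  classical
  have hblocks := hZ.indepFun_finset (Finset.univ.map Function.Embedding.inl)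
    (Finset.univ.map Function.Embedding.inr) (by simp [Finset.disjoint_left]) hmeas
  exact hblocks.comp (φ := fun v i => v ⟨Sum.inl i, by simp⟩)
    (ψ := fun v j => v ⟨Sum.inr j, by simp⟩)
    (measurable_pi_lambda _ fun _ => measurable_pi_apply _)
    (measurable_pi_lambda _ fun _ => measurable_pi_apply _)

lemma variance_mean_comp_of_pairwise_indepFun {ι X : Type*} [MeasurableSpace X] [Fintype ι]
    {ν : Measure X} {Y : ι → Ω → X} {g : X → ℝ} (hY : ∀ i, MeasurePreserving (Y i) μ ν)
    (hindep : Pairwise fun i j => IndepFun (Y i) (Y j) μ) (hg : Measurable g)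
    (hg2 : MemLp g 2 ν) :
    variance (fun ω => (Fintype.card ι : ℝ)⁻¹ * ∑ i, g (Y i ω)) μ
      = variance g ν / Fintype.card ι := by
  have hsum : variance (∑ i, fun ω => g (Y i ω)) μ = Fintype.card ι * variance g ν := by
    rw [IndepFun.variance_sum (X := fun i ω => g (Y i ω))
      (fun i _ => hg2.comp_measurePreserving (hY i))
      (fun i _ j _ hij => (hindep hij).comp hg hg)]
    simp [(hY _).variance_fun_comp hg.aemeasurable]
  rw [variance_const_mul, ← Finset.sum_fn, hsum]
  rcases eq_or_ne (Fintype.card ι : ℝ) 0 with hcard | hcard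
  · simp [hcard]
  · field_simp

lemma IndepFun.variance_le_variance_sub {X Y : Ω → ℝ} (hX : MemLp X 2 μ)
    (hY : MemLp Y 2 μ) (h : IndepFun X Y μ) :
    variance Y μ ≤ variance (fun ω => X ω - Y ω) μ := by
  have hsum := (h.comp measurable_id measurable_neg).variance_fun_add hX hY.neg
  simp only [Pi.neg_apply, ← sub_eq_add_neg, variance_neg] at hsum
  linarith [variance_nonneg X μ]

end ProbabilityTheory

end Independence

theorem stmt16_general {X : Type*} [MeasurableSpace X] (P Q : Measure X)
    [IsProbabilityMeasure P] [IsProbabilityMeasure Q] (hPQ : P ≪ Q)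
    (hvar : Integrable (fun x => ((P.rnDeriv Q x).toReal) ^ 2) Q)
    {Ω : Type*} [MeasurableSpace Ω] (μ : Measure Ω) [IsProbabilityMeasure μ]
    (m n : ℕ)
    (Z : Fin m ⊕ Fin n → Ω → X)
    (hmeas : ∀ k, Measurable (Z k))
    (hindep : iIndepFun Z μ)
    (hlawP : ∀ i : Fin m, μ.map (Z (Sum.inl i)) = P)
    (hlawQ : ∀ j : Fin n, μ.map (Z (Sum.inr j)) = Q) :
    (Real.exp (klDiv P Q) - 1) / n ≤
      variance (fun ω =>
        (m : ℝ)⁻¹ * ∑ i : Fin m,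
            (Real.log ((P.rnDeriv Q (Z (Sum.inl i) ω)).toReal) + 1) -
          (n : ℝ)⁻¹ * ∑ j : Fin n, (P.rnDeriv Q (Z (Sum.inr j) ω)).toReal) μ := by
  set r : X → ℝ := fun x => (P.rnDeriv Q x).toReal
  have hr : Measurable r := (Measure.measurable_rnDeriv P Q).ennreal_toReal
  have hr2 : MemLp r 2 Q := (memLp_two_iff_integrable_sq hr.aestronglyMeasurable).2 hvar
  have hlog2 : MemLp (fun x => log (r x) + 1) 2 P :=
    (memLp_two_log_toReal_rnDeriv hPQ hvar).add (memLp_const 1)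
  have hZP : ∀ i, MeasurePreserving (Z (Sum.inl i)) μ P := fun i => ⟨hmeas _, hlawP i⟩
  have hZQ : ∀ j, MeasurePreserving (Z (Sum.inr j)) μ Q := fun j => ⟨hmeas _, hlawQ j⟩
  have hblocks : IndepFun (fun ω => (m : ℝ)⁻¹ * ∑ i : Fin m, (log (r (Z (Sum.inl i) ω)) + 1))
      (fun ω => (n : ℝ)⁻¹ * ∑ j : Fin n, r (Z (Sum.inr j) ω)) μ := by
    have hφ : Measurable fun v : Fin m → X => (m : ℝ)⁻¹ * ∑ i, (log (r (v i)) + 1) := by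
      fun_prop
    have hψ : Measurable fun v : Fin n → X => (n : ℝ)⁻¹ * ∑ j, r (v j) := by fun_prop
    exact (hindep.indepFun_sumInl_sumInr hmeas).comp hφ hψ
  have hmeanQ : variance (fun ω => (n : ℝ)⁻¹ * ∑ j : Fin n, r (Z (Sum.inr j) ω)) μ
      = variance r Q / n := by
    simpa using variance_mean_comp_of_pairwise_indepFun hZQ
      (fun i j hij => hindep.indepFun (Sum.inr_injective.ne hij)) hr hr2
  calc (exp (klDiv P Q) - 1) / n ≤ variance r Q / n := by
        gcongr; exact exp_klDiv_sub_one_le_variance_toReal_rnDeriv hPQ hvar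
    _ = _ := hmeanQ.symm
    _ ≤ _ := hblocks.variance_le_variance_sub (memLp_const_mul_sum_comp hZP hlog2 _)
        (memLp_const_mul_sum_comp hZQ hr2 _)

/-- The variance of the NWJ estimator at the optimal critic,
`I_NWJ^{m,n} = E_{P_m}[log r* + 1] − E_{Q_n}[r*]` with `r* = dP/dQ`, computed from `m`
i.i.d. samples from `P` and `n` i.i.d. samples from `Q` (all mutually independent),
is at least `(exp(D_KL(P‖Q)) − 1)/n` for every `m`. -/
theorem stmt16 {X : Type*} [MeasurableSpace X] (P Q : Measure X)
    [IsProbabilityMeasure P] [IsProbabilityMeasure Q] (hPQ : P ≪ Q)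
    (hvar : Integrable (fun x => ((P.rnDeriv Q x).toReal) ^ 2) Q)
    {Ω : Type*} [MeasurableSpace Ω] (μ : Measure Ω) [IsProbabilityMeasure μ]
    (m n : ℕ) (hm : 0 < m) (hn : 0 < n)
    (Z : Fin m ⊕ Fin n → Ω → X)
    (hmeas : ∀ k, Measurable (Z k))
    (hindep : iIndepFun Z μ)
    (hlawP : ∀ i : Fin m, μ.map (Z (Sum.inl i)) = P)
    (hlawQ : ∀ j : Fin n, μ.map (Z (Sum.inr j)) = Q) :
    (Real.exp (klDiv P Q) - 1) / n ≤
      variance (fun ω =>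
        (m : ℝ)⁻¹ * ∑ i : Fin m,
            (Real.log ((P.rnDeriv Q (Z (Sum.inl i) ω)).toReal) + 1) -
          (n : ℝ)⁻¹ * ∑ j : Fin n, (P.rnDeriv Q (Z (Sum.inr j) ω)).toReal) μ :=
  stmt16_general P Q hPQ hvar μ m n Z hmeas hindep hlawP hlawQ
end
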